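/- arXiv:1902.04578 — 2 statements merged into one kernel-verified Lean document; each statement's English description precedes it below -/
import Mathlib

section
/- Let p ≥ 2 and p/2 ≤ r ≤ p. If α ≤ 0, then every minimizer of λ_α(p,r) does not change sign in (−1,1) (it is either nonnegative or nonpositive on (−1,1)). Moreover λ_α(p,r) → −∞ as α → −∞. -/
open Set MeasureTheory intervalIntegral Real

noncomputable section

/-- `MemW0 p u g` : `u ∈ W_0^{1,p}(-1,1)` with (weak) derivative `g`, i.e. `u` is the
absolutely continuous primitive of `g ∈ L^p(-1,1)` vanishing at both endpoints. -/
def MemW0 (p : ℝ) (u g : ℝ → ℝ) : Prop :=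
  IntervalIntegrable g volume (-1) 1 ∧
  IntervalIntegrable (fun x => |g x| ^ p) volume (-1) 1 ∧
  (∀ x ∈ Icc (-1 : ℝ) 1, u x = ∫ t in (-1 : ℝ)..x, g t) ∧
  u 1 = 0

/-- The Rayleigh-type quotient `Q_α[u]` (here `g` stands for `u'`). -/
def QRay (p r α : ℝ) (u g : ℝ → ℝ) : ℝ :=
  ((∫ x in (-1 : ℝ)..1, |g x| ^ p) +
      α * |∫ x in (-1 : ℝ)..1, |u x| ^ (r - 1) * u x| ^ (p / r)) /
    ∫ x in (-1 : ℝ)..1, |u x| ^ p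

/-- `u ≢ 0` on `[-1,1]`. -/
def Nontriv (u : ℝ → ℝ) : Prop := ∃ x ∈ Icc (-1 : ℝ) 1, u x ≠ 0

/-- `λ_α(p,r)`, the infimum of the quotient `Q_α`. -/
def lam (p r α : ℝ) : ℝ :=
  sInf {v | ∃ u g, MemW0 p u g ∧ Nontriv u ∧ v = QRay p r α u g}

/-- `π_p`. -/
def pip (p : ℝ) : ℝ :=
  2 * ∫ t in (0 : ℝ)..(p - 1) ^ (1 / p), (1 - t ^ p / (p - 1)) ^ (-(1 / p))

/-!
For `α < 0`, suppose a minimizer `u` changes sign and, replacing `u` by `-u`, that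
`∫ |u|^(r-1) u ≥ 0`. Reflecting `u ↦ -u` on a nodal interval where `u < 0` leaves `∫ |u'|^p`
and `∫ |u|^p` unchanged but strictly increases `|∫ |u|^(r-1) u|`, so the quotient drops below
`λ_α`.

For `α = 0` the quotient is the Rayleigh quotient. Cut `u` at an interior zero `c`: the part on
`[c, 1]` is admissible, so its quotient is at least `λ₀`, hence the part on `[-1, c]` has quotient
at most `λ₀`. Stretching that part affinely onto `[-1, 1]` multiplies its quotient by
`((c + 1) / 2)^p < 1`, which is impossible since `λ₀ > 0`.

For `α ≤ 0` the pointwise bound `y^r ≤ t^r + t^(r-p) y^p` with `t^p = ∫ |u|^p` gives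
`Q_α ≥ 3^(p/r) α`; in particular the infimum `lam` is not the junk value of an unbounded `sInf`.
The test function `1 - x²` then shows that `λ_α` is at most an affine function of `α` with
negative slope.
-/

lemma abs_rpow_sub_one_mul_self_of_nonneg {r a : ℝ} (hr : r ≠ 0) (ha : 0 ≤ a) :
    |a| ^ (r - 1) * a = |a| ^ r := by
  rcases ha.eq_or_lt with rfl | ha
  · simp [Real.zero_rpow hr]
  · rw [abs_of_pos ha, Real.rpow_sub_one ha.ne', div_mul_cancel₀ _ ha.ne']

lemma abs_rpow_sub_one_mul_self_of_nonpos {r a : ℝ} (hr : r ≠ 0) (ha : a ≤ 0) :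
    |a| ^ (r - 1) * a = -|a| ^ r := by
  have := abs_rpow_sub_one_mul_self_of_nonneg hr (neg_nonneg.2 ha)
  rw [abs_neg] at this
  linarith

lemma abs_abs_rpow_sub_one_mul_self {r : ℝ} (hr : r ≠ 0) (a : ℝ) :
    |(|a| ^ (r - 1) * a)| = |a| ^ r := by
  rw [abs_mul, abs_of_nonneg (Real.rpow_nonneg (abs_nonneg a) _)]
  simpa only [abs_abs] using abs_rpow_sub_one_mul_self_of_nonneg hr (abs_nonneg a)

lemma rpow_le_rpow_add_rpow_sub_mul_rpow {y t r p : ℝ} (hy : 0 ≤ y) (ht : 0 < t) (hr : 0 ≤ r)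
    (hrp : r ≤ p) : y ^ r ≤ t ^ r + t ^ (r - p) * y ^ p := by
  rcases le_total y t with hyt | hty
  · have := Real.rpow_le_rpow hy hyt hr
    have := mul_nonneg (Real.rpow_nonneg ht.le (r - p)) (Real.rpow_nonneg hy p)
    linarith
  · calc y ^ r = y ^ (r - p) * y ^ p := by
          rw [← Real.rpow_add (ht.trans_le hty), sub_add_cancel]
      _ ≤ t ^ (r - p) * y ^ p := mul_le_mul_of_nonneg_right
          (Real.rpow_le_rpow_of_nonpos ht hty (by linarith)) (Real.rpow_nonneg hy p)
      _ ≤ t ^ r + t ^ (r - p) * y ^ p := le_add_of_nonneg_left (Real.rpow_nonneg ht.le r)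

lemma abs_sub_two_mul_indicator (f : ℝ → ℝ) (s : Set ℝ) (x : ℝ) :
    |f x - 2 * s.indicator f x| = |f x| := by
  by_cases hx : x ∈ s
  · rw [indicator_of_mem hx, show f x - 2 * f x = -f x by ring, abs_neg]
  · rw [indicator_of_notMem hx, mul_zero, sub_zero]

lemma abs_rpow_indicator {f : ℝ → ℝ} {s : Set ℝ} {p : ℝ} (hp : p ≠ 0) :
    (fun x => |s.indicator f x| ^ p) = s.indicator fun x => |f x| ^ p :=
  (indicator_comp_of_zero (g := fun y : ℝ => |y| ^ p) (by simp [Real.zero_rpow hp])).symm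

lemma IntervalIntegrable.mono_of_mem_Icc {f : ℝ → ℝ} {a b x y : ℝ}
    (hf : IntervalIntegrable f volume a b) (hx : x ∈ Icc a b) (hy : y ∈ Icc a b) :
    IntervalIntegrable f volume x y :=
  hf.mono_set (uIcc_subset_uIcc_iff_mem.2 ⟨Icc_subset_uIcc hx, Icc_subset_uIcc hy⟩)

lemma IntervalIntegrable.indicator_Ioc {f : ℝ → ℝ} {a b x y : ℝ}
    (hf : IntervalIntegrable f volume x y) :
    IntervalIntegrable ((Ioc a b).indicator f) volume x y := by
  rw [intervalIntegrable_iff] at hf ⊢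
  exact hf.indicator measurableSet_Ioc

lemma IntervalIntegrable.comp_mul_add {f : ℝ → ℝ} {a b c d : ℝ} (hc : c ≠ 0)
    (hf : IntervalIntegrable f volume (c * a + d) (c * b + d)) :
    IntervalIntegrable (fun x => f (c * x + d)) volume a b := by
  simpa [hc] using (hf.comp_add_right d).comp_mul_left (c := c)

lemma intervalIntegral_indicator_Ioc {f : ℝ → ℝ} {a b x y : ℝ} (hxy : x ≤ y) :
    ∫ t in x..y, (Ioc a b).indicator f t = ∫ t in Ioc (max x a) (min y b), f t := by
  rw [intervalIntegral.integral_of_le hxy, setIntegral_indicator measurableSet_Ioc, Ioc_inter_Ioc]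

lemma integral_indicator_Ioc_eq {f : ℝ → ℝ} {a b x y : ℝ} (hxa : x ≤ a) (hab : a ≤ b)
    (hby : b ≤ y) : ∫ t in x..y, (Ioc a b).indicator f t = ∫ t in a..b, f t := by
  rw [intervalIntegral_indicator_Ioc (hxa.trans (hab.trans hby)), max_eq_right hxa,
    min_eq_right hby, intervalIntegral.integral_of_le hab]

lemma integral_comp_mul_add_sub_one (F : ℝ → ℝ) {k : ℝ} (hk : k ≠ 0) :
    ∫ x in (-1 : ℝ)..1, F (k * x + (k - 1)) = k⁻¹ * ∫ x in (-1 : ℝ)..(2 * k - 1), F x := by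
  rw [intervalIntegral.integral_comp_mul_add F hk, smul_eq_mul]
  ring_nf

lemma integral_abs_rpow_pos {u : ℝ → ℝ} {a b q : ℝ} (hab : a < b)
    (hu : ContinuousOn u (Icc a b)) (hq : 0 ≤ q) (hne : ∃ x ∈ Icc a b, u x ≠ 0) :
    0 < ∫ x in a..b, |u x| ^ q := by
  obtain ⟨x, hx, hux⟩ := hne
  exact intervalIntegral.integral_pos hab (hu.abs.rpow_const fun _ _ => Or.inr hq)
    (fun _ _ => Real.rpow_nonneg (abs_nonneg _) _) ⟨x, hx, Real.rpow_pos_of_pos (abs_pos.2 hux) _⟩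

lemma integral_abs_rpow_le {u : ℝ → ℝ} {a b r p : ℝ} (hab : a ≤ b) (hu : ContinuousOn u (Icc a b))
    (hr : 0 < r) (hrp : r ≤ p) (hD : 0 < ∫ x in a..b, |u x| ^ p) :
    ∫ x in a..b, |u x| ^ r ≤ (b - a + 1) * (∫ x in a..b, |u x| ^ p) ^ (r / p) := by
  set D := ∫ x in a..b, |u x| ^ p
  set t := D ^ (1 / p)
  have hp : 0 < p := hr.trans_le hrp
  have ht : 0 < t := Real.rpow_pos_of_pos hD _
  have htp : t ^ p = D := by
    rw [← Real.rpow_mul hD.le, one_div_mul_cancel hp.ne', Real.rpow_one]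
  have htr : t ^ r = D ^ (r / p) := by
    rw [← Real.rpow_mul hD.le, one_div_mul_eq_div]
  have hcont : ∀ q : ℝ, 0 ≤ q → IntervalIntegrable (fun x => |u x| ^ q) volume a b := fun q hq =>
    (hu.abs.rpow_const fun _ _ => Or.inr hq).intervalIntegrable_of_Icc hab
  calc ∫ x in a..b, |u x| ^ r
      ≤ ∫ x in a..b, (t ^ r + t ^ (r - p) * |u x| ^ p) :=
        intervalIntegral.integral_mono_on hab (hcont r hr.le)
          (intervalIntegrable_const.add ((hcont p hp.le).const_mul _))
          fun x _ => rpow_le_rpow_add_rpow_sub_mul_rpow (abs_nonneg _) ht hr.le hrp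
    _ = (b - a) * t ^ r + t ^ (r - p) * t ^ p := by
        rw [intervalIntegral.integral_add intervalIntegrable_const ((hcont p hp.le).const_mul _),
          intervalIntegral.integral_const, intervalIntegral.integral_const_mul, smul_eq_mul, htp]
    _ = (b - a + 1) * D ^ (r / p) := by
        rw [← Real.rpow_add ht, sub_add_cancel, htr]
        ring

lemma abs_integral_rpow_le {u : ℝ → ℝ} {r p : ℝ} (hu : ContinuousOn u (Icc (-1) 1)) (hr : 0 < r)
    (hrp : r ≤ p) (hD : 0 < ∫ x in (-1 : ℝ)..1, |u x| ^ p) :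
    |∫ x in (-1 : ℝ)..1, |u x| ^ (r - 1) * u x| ^ (p / r)
      ≤ 3 ^ (p / r) * ∫ x in (-1 : ℝ)..1, |u x| ^ p := by
  have hbound : |∫ x in (-1 : ℝ)..1, |u x| ^ (r - 1) * u x|
      ≤ 3 * (∫ x in (-1 : ℝ)..1, |u x| ^ p) ^ (r / p) := by
    calc |∫ x in (-1 : ℝ)..1, |u x| ^ (r - 1) * u x|
        ≤ ∫ x in (-1 : ℝ)..1, |(|u x| ^ (r - 1) * u x)| :=
          intervalIntegral.abs_integral_le_integral_abs (by norm_num)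
      _ = ∫ x in (-1 : ℝ)..1, |u x| ^ r := by
          simp only [abs_abs_rpow_sub_one_mul_self hr.ne']
      _ ≤ 3 * (∫ x in (-1 : ℝ)..1, |u x| ^ p) ^ (r / p) := by
          convert integral_abs_rpow_le (by norm_num) hu hr hrp hD using 2
          norm_num
  calc |∫ x in (-1 : ℝ)..1, |u x| ^ (r - 1) * u x| ^ (p / r)
      ≤ (3 * (∫ x in (-1 : ℝ)..1, |u x| ^ p) ^ (r / p)) ^ (p / r) :=
        Real.rpow_le_rpow (abs_nonneg _) hbound (div_nonneg (hr.trans_le hrp).le hr.le)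
    _ = 3 ^ (p / r) * ∫ x in (-1 : ℝ)..1, |u x| ^ p := by
        rw [Real.mul_rpow (by norm_num) (Real.rpow_nonneg hD.le _), ← Real.rpow_mul hD.le,
          show r / p * (p / r) = 1 by field_simp [(hr.trans_le hrp).ne'], Real.rpow_one]

lemma exists_zero_forall_neg_Ioc {u : ℝ → ℝ} {a b : ℝ} (hab : a ≤ b)
    (hu : ContinuousOn u (Icc a b)) (ha : 0 ≤ u a) (hb : u b < 0) :
    ∃ c ∈ Ico a b, u c = 0 ∧ ∀ x ∈ Ioc c b, u x < 0 := by
  set S := Icc a b ∩ u ⁻¹' Ici 0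
  have hS : IsCompact S := isCompact_Icc.of_isClosed_subset
    (hu.preimage_isClosed_of_isClosed isClosed_Icc isClosed_Ici) inter_subset_left
  have hcS : sSup S ∈ S := hS.sSup_mem ⟨a, ⟨le_rfl, hab⟩, ha⟩
  have hneg : ∀ x ∈ Ioc (sSup S) b, u x < 0 := fun x hx => not_le.1 fun hux =>
    hx.1.not_ge (le_csSup hS.bddAbove ⟨⟨hcS.1.1.trans hx.1.le, hx.2⟩, hux⟩)
  have hcb : sSup S < b := hcS.1.2.lt_of_ne fun h => (h ▸ hcS.2 : 0 ≤ u b).not_gt hb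
  refine ⟨sSup S, ⟨hcS.1.1, hcb⟩, ?_, hneg⟩
  by_contra hne
  have hpos : 0 < u (sSup S) := lt_of_le_of_ne hcS.2 (Ne.symm hne)
  obtain ⟨z, hz, huz⟩ := intermediate_value_Icc' hcb.le (hu.mono (Icc_subset_Icc hcS.1.1 le_rfl))
    ⟨hb.le, hpos.le⟩
  rcases hz.1.eq_or_lt with rfl | hcz
  · exact hpos.ne' huz
  · exact (hneg z ⟨hcz, hz.2⟩).ne huz

lemma exists_nodal_interval {u : ℝ → ℝ} {a b x : ℝ} (hu : ContinuousOn u (Icc a b))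
    (ha : u a = 0) (hb : u b = 0) (hx : x ∈ Icc a b) (hux : u x < 0) :
    ∃ c₁ c₂, a ≤ c₁ ∧ c₁ < x ∧ x < c₂ ∧ c₂ ≤ b ∧ u c₁ = 0 ∧ u c₂ = 0 ∧
      ∀ y ∈ Icc c₁ c₂, u y ≤ 0 := by
  obtain ⟨c₁, hc₁, hu₁, hneg₁⟩ := exists_zero_forall_neg_Ioc hx.1
    (hu.mono (Icc_subset_Icc le_rfl hx.2)) ha.ge hux
  obtain ⟨c₂, hc₂, hu₂, hneg₂⟩ := exists_zero_forall_neg_Ioc (u := fun y => u (-y))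
    (neg_le_neg hx.2) (hu.comp continuous_neg.continuousOn fun y hy => by
      constructor <;> linarith [hy.1, hy.2, hx.1]) (by simp [hb]) (by simpa using hux)
  refine ⟨c₁, -c₂, hc₁.1, hc₁.2, lt_neg.1 hc₂.2, neg_le.1 hc₂.1, hu₁, hu₂, fun y hy => ?_⟩
  rcases le_total y x with hyx | hxy
  · rcases hy.1.eq_or_lt with rfl | hcy
    · exact hu₁.le
    · exact (hneg₁ y ⟨hcy, hyx⟩).le
  · rcases hy.2.eq_or_lt with rfl | hyc
    · simpa using hu₂.le
    · simpa using (hneg₂ (-y) ⟨lt_neg.1 hyc, neg_le_neg hxy⟩).le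

namespace MemW0

variable {p : ℝ} {u g : ℝ → ℝ}

lemma continuousOn (hu : MemW0 p u g) : ContinuousOn u (Icc (-1) 1) := by
  have := intervalIntegral.continuousOn_primitive_interval' hu.1 left_mem_uIcc
  rw [uIcc_of_le (by norm_num)] at this
  exact this.congr hu.2.2.1

lemma apply_neg_one (hu : MemW0 p u g) : u (-1) = 0 := by
  rw [hu.2.2.1 (-1) (by norm_num), intervalIntegral.integral_same]

lemma integral_eq_sub (hu : MemW0 p u g) {x y : ℝ} (hx : x ∈ Icc (-1 : ℝ) 1)
    (hy : y ∈ Icc (-1 : ℝ) 1) : ∫ t in x..y, g t = u y - u x := by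
  have h₁ : (-1 : ℝ) ∈ Icc (-1 : ℝ) 1 := ⟨le_rfl, by norm_num⟩
  rw [hu.2.2.1 x hx, hu.2.2.1 y hy, intervalIntegral.integral_interval_sub_left
    (hu.1.mono_of_mem_Icc h₁ hy) (hu.1.mono_of_mem_Icc h₁ hx)]

lemma neg (hu : MemW0 p u g) : MemW0 p (-u) (-g) := by
  refine ⟨hu.1.neg, by simpa only [Pi.neg_apply, abs_neg] using hu.2.1, fun x hx => ?_, by
    simp [hu.2.2.2]⟩
  simp only [Pi.neg_apply, intervalIntegral.integral_neg, hu.2.2.1 x hx]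

lemma eq_zero_of_integral_eq_zero (hu : MemW0 p u g) (hg : ∫ x in (-1 : ℝ)..1, |g x| ^ p = 0) :
    ∀ x ∈ Icc (-1 : ℝ) 1, u x = 0 := by
  have hg0 : ∀ᵐ t, t ∈ Ioc (-1 : ℝ) 1 → g t = 0 := by
    have := (intervalIntegral.integral_eq_zero_iff_of_le_of_nonneg_ae (by norm_num)
      (Filter.Eventually.of_forall fun t => Real.rpow_nonneg (abs_nonneg (g t)) p) hu.2.1).1 hg
    filter_upwards [(ae_restrict_iff' measurableSet_Ioc).1 this] with t ht hmem
    simpa using ((Real.rpow_eq_zero_iff_of_nonneg (abs_nonneg _)).1 (ht hmem)).1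
  intro x hx
  rw [hu.2.2.1 x hx, ← intervalIntegral.integral_zero (a := -1) (b := x) (μ := volume)]
  apply intervalIntegral.integral_congr_ae
  filter_upwards [hg0] with t ht htx
  refine ht ?_
  rw [uIoc_of_le hx.1] at htx
  exact ⟨htx.1, htx.2.trans hx.2⟩

lemma integral_abs_rpow_pos {q : ℝ} (hu : MemW0 p u g) (hq : 0 ≤ q) (hne : Nontriv u) :
    0 < ∫ x in (-1 : ℝ)..1, |u x| ^ q :=
  _root_.integral_abs_rpow_pos (by norm_num) hu.continuousOn hq hne

lemma indicator_Ioc (hp : p ≠ 0) (hu : MemW0 p u g) {a b : ℝ} (ha : -1 ≤ a) (hab : a ≤ b)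
    (hb : b ≤ 1) (hua : u a = 0) (hub : u b = 0) :
    MemW0 p ((Ioc a b).indicator u) ((Ioc a b).indicator g) := by
  refine ⟨hu.1.indicator_Ioc, by rw [abs_rpow_indicator hp]; exact hu.2.1.indicator_Ioc,
    fun x hx => ?_, indicator_apply_eq_zero.2 fun h1 => by rwa [← le_antisymm hb h1.2]⟩
  rw [intervalIntegral_indicator_Ioc hx.1, max_eq_right ha]
  rcases le_or_gt x a with hxa | hax
  · rw [Ioc_eq_empty (min_le_left x b |>.trans hxa).not_gt, setIntegral_empty,
      indicator_of_notMem fun h => h.1.not_ge hxa]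
  · rw [← intervalIntegral.integral_of_le (le_min hax.le hab),
      hu.integral_eq_sub ⟨ha, hab.trans hb⟩
        ⟨ha.trans (le_min hax.le hab), (min_le_right x b).trans hb⟩, hua, sub_zero]
    rcases le_or_gt x b with hxb | hbx
    · rw [min_eq_left hxb, indicator_of_mem (show x ∈ Ioc a b from ⟨hax, hxb⟩)]
    · rw [min_eq_right hbx.le, hub, indicator_of_notMem fun h => h.2.not_gt hbx]

lemma sub_two_mul_indicator_Ioc (hp : p ≠ 0) (hu : MemW0 p u g) {a b : ℝ} (ha : -1 ≤ a)
    (hab : a ≤ b) (hb : b ≤ 1) (hua : u a = 0) (hub : u b = 0) :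
    MemW0 p (fun x => u x - 2 * (Ioc a b).indicator u x)
      (fun x => g x - 2 * (Ioc a b).indicator g x) := by
  have hw := hu.indicator_Ioc hp ha hab hb hua hub
  refine ⟨hu.1.sub (hw.1.const_mul 2), by simpa only [abs_sub_two_mul_indicator] using hu.2.1,
    fun x hx => ?_, by simp only [hu.2.2.2, hw.2.2.2, mul_zero, sub_zero]⟩
  have hx' : -1 ∈ Icc (-1 : ℝ) 1 := ⟨le_rfl, by norm_num⟩
  rw [intervalIntegral.integral_sub (hu.1.mono_of_mem_Icc hx' hx)
    ((hw.1.mono_of_mem_Icc hx' hx).const_mul 2), intervalIntegral.integral_const_mul,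
    ← hu.2.2.1 x hx, ← hw.2.2.1 x hx]

lemma comp_mul_add (hu : MemW0 p u g) {k : ℝ} (hk0 : 0 < k) (hk1 : k ≤ 1)
    (huk : u (2 * k - 1) = 0) :
    MemW0 p (fun x => u (k * x + (k - 1))) (fun x => k * g (k * x + (k - 1))) := by
  have hI : Icc (k * -1 + (k - 1)) (k * 1 + (k - 1)) ⊆ Icc (-1 : ℝ) 1 :=
    Icc_subset_Icc (by linarith) (by linarith)
  have hcomp : ∀ f : ℝ → ℝ, IntervalIntegrable f volume (-1) 1 →
      IntervalIntegrable (fun x => f (k * x + (k - 1))) volume (-1) 1 := fun f hf =>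
    .comp_mul_add hk0.ne' (hf.mono_of_mem_Icc (hI ⟨le_rfl, by linarith⟩) (hI ⟨by linarith, le_rfl⟩))
  refine ⟨(hcomp g hu.1).const_mul k, ?_, fun x hx => ?_, by rw [← huk]; ring_nf⟩
  · have e : (fun x => |k * g (k * x + (k - 1))| ^ p)
        = fun x => k ^ p * (fun y => |g y| ^ p) (k * x + (k - 1)) := by
      ext x
      rw [abs_mul, abs_of_pos hk0, Real.mul_rpow hk0.le (abs_nonneg _)]
    rw [e]
    exact (hcomp _ hu.2.1).const_mul _
  · rw [intervalIntegral.integral_const_mul, intervalIntegral.integral_comp_mul_add g hk0.ne',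
      smul_eq_mul, mul_inv_cancel_left₀ hk0.ne', show k * -1 + (k - 1) = -1 by ring,
      ← hu.2.2.1 _ (hI ⟨by nlinarith [hx.1], by nlinarith [hx.2]⟩)]

end MemW0

lemma memW0_one_sub_sq (p : ℝ) (hp : 0 ≤ p) : MemW0 p (fun x => 1 - x ^ 2) fun x => -(2 * x) := by
  have hg : Continuous fun x : ℝ => -(2 * x) := by fun_prop
  refine ⟨hg.intervalIntegrable _ _,
    (hg.abs.rpow_const fun _ => Or.inr hp).intervalIntegrable _ _, fun x _ => ?_, by norm_num⟩
  rw [intervalIntegral.integral_neg, intervalIntegral.integral_const_mul, integral_id]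
  ring

lemma QRay_zero (p r : ℝ) (u g : ℝ → ℝ) :
    QRay p r 0 u g = (∫ x in (-1 : ℝ)..1, |g x| ^ p) / ∫ x in (-1 : ℝ)..1, |u x| ^ p := by
  simp [QRay]

lemma QRay_neg (p r α : ℝ) (u g : ℝ → ℝ) : QRay p r α (-u) (-g) = QRay p r α u g := by
  simp only [QRay, Pi.neg_apply, abs_neg, mul_neg, intervalIntegral.integral_neg]

lemma QRay_zero_comp_mul_add (p r : ℝ) (u g : ℝ → ℝ) {k : ℝ} (hk : 0 < k) :
    QRay p r 0 (fun x => u (k * x + (k - 1))) (fun x => k * g (k * x + (k - 1)))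
      = k ^ p * ((∫ x in (-1 : ℝ)..(2 * k - 1), |g x| ^ p)
        / ∫ x in (-1 : ℝ)..(2 * k - 1), |u x| ^ p) := by
  have e : (fun x => |k * g (k * x + (k - 1))| ^ p)
      = fun x => k ^ p * (fun y => |g y| ^ p) (k * x + (k - 1)) := by
    ext x
    rw [abs_mul, abs_of_pos hk, Real.mul_rpow hk.le (abs_nonneg _)]
  rw [QRay_zero, e, intervalIntegral.integral_const_mul,
    integral_comp_mul_add_sub_one (fun y => |g y| ^ p) hk.ne',
    integral_comp_mul_add_sub_one (fun y => |u y| ^ p) hk.ne', mul_div_assoc,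
    mul_div_mul_left _ _ (inv_ne_zero hk.ne')]

lemma mul_three_rpow_le_QRay {p r α : ℝ} {u g : ℝ → ℝ} (hr : 0 < r) (hrp : r ≤ p) (hα : α ≤ 0)
    (hu : MemW0 p u g) (hne : Nontriv u) : α * 3 ^ (p / r) ≤ QRay p r α u g := by
  have hD := hu.integral_abs_rpow_pos (hr.le.trans hrp) hne
  have hB := mul_le_mul_of_nonpos_left (abs_integral_rpow_le hu.continuousOn hr hrp hD) hα
  have hA : 0 ≤ ∫ x in (-1 : ℝ)..1, |g x| ^ p :=
    intervalIntegral.integral_nonneg (by norm_num) fun x _ => Real.rpow_nonneg (abs_nonneg _) _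
  rw [QRay, le_div_iff₀ hD]
  linarith

lemma lam_le_QRay {p r α : ℝ} {u g : ℝ → ℝ} (hr : 0 < r) (hrp : r ≤ p) (hα : α ≤ 0)
    (hu : MemW0 p u g) (hne : Nontriv u) : lam p r α ≤ QRay p r α u g :=
  csInf_le ⟨α * 3 ^ (p / r), by
    rintro _ ⟨v, h, hv, hvne, rfl⟩
    exact mul_three_rpow_le_QRay hr hrp hα hv hvne⟩
    ⟨u, g, hu, hne, rfl⟩

lemma integral_rpow_sub_two_mul_indicator_Ioc {u : ℝ → ℝ} {r a b : ℝ}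
    (hF : IntervalIntegrable (fun x => |u x| ^ (r - 1) * u x) volume (-1) 1)
    (ha : -1 ≤ a) (hab : a ≤ b) (hb : b ≤ 1) :
    ∫ x in (-1 : ℝ)..1, |u x - 2 * (Ioc a b).indicator u x| ^ (r - 1)
        * (u x - 2 * (Ioc a b).indicator u x)
      = (∫ x in (-1 : ℝ)..1, |u x| ^ (r - 1) * u x)
        - 2 * ∫ x in a..b, |u x| ^ (r - 1) * u x := by
  have hpt : ∀ x, |u x - 2 * (Ioc a b).indicator u x| ^ (r - 1)
      * (u x - 2 * (Ioc a b).indicator u x)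
      = |u x| ^ (r - 1) * u x - 2 * (Ioc a b).indicator (fun y => |u y| ^ (r - 1) * u y) x := by
    intro x
    by_cases hx : x ∈ Ioc a b
    · simp only [indicator_of_mem hx, show u x - 2 * u x = -u x by ring, abs_neg]
      ring
    · simp only [indicator_of_notMem hx, mul_zero, sub_zero]
  simp only [hpt]
  rw [intervalIntegral.integral_sub hF (hF.indicator_Ioc.const_mul 2),
    intervalIntegral.integral_const_mul, integral_indicator_Ioc_eq ha hab hb]

lemma integral_rpow_sub_one_mul_self_neg {u : ℝ → ℝ} {r a b x : ℝ} (hr : 0 < r) (hab : a < b)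
    (hu : ContinuousOn u (Icc a b)) (hnonpos : ∀ y ∈ Icc a b, u y ≤ 0) (hx : x ∈ Icc a b)
    (hux : u x < 0) : ∫ y in a..b, |u y| ^ (r - 1) * u y < 0 := by
  rw [intervalIntegral.integral_congr fun y hy => abs_rpow_sub_one_mul_self_of_nonpos hr.ne'
    (hnonpos y (by rwa [uIcc_of_le hab.le] at hy)), intervalIntegral.integral_neg, neg_lt_zero]
  exact integral_abs_rpow_pos hab hu hr.le ⟨x, hx, hux.ne⟩

lemma QRay_lt_QRay_of_abs_integral_lt {p r α : ℝ} {u g v h : ℝ → ℝ} (hp : 0 < p) (hr : 0 < r)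
    (hα : α < 0) (hD : 0 < ∫ x in (-1 : ℝ)..1, |u x| ^ p)
    (hvu : ∫ x in (-1 : ℝ)..1, |v x| ^ p = ∫ x in (-1 : ℝ)..1, |u x| ^ p)
    (hhg : ∫ x in (-1 : ℝ)..1, |h x| ^ p = ∫ x in (-1 : ℝ)..1, |g x| ^ p)
    (hB : |∫ x in (-1 : ℝ)..1, |u x| ^ (r - 1) * u x|
      < |∫ x in (-1 : ℝ)..1, |v x| ^ (r - 1) * v x|) :
    QRay p r α v h < QRay p r α u g := by
  rw [QRay, QRay, hvu, hhg]
  gcongr ?_ / _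
  have := Real.rpow_lt_rpow (abs_nonneg _) hB (div_pos hp hr)
  linarith [mul_lt_mul_of_neg_left this hα]

lemma lam_lt_QRay_of_neg {p r α : ℝ} {u g : ℝ → ℝ} (hr : 1 ≤ r) (hrp : r ≤ p) (hα : α < 0)
    (hu : MemW0 p u g) (hne : Nontriv u) (hI : 0 ≤ ∫ x in (-1 : ℝ)..1, |u x| ^ (r - 1) * u x)
    {x : ℝ} (hx : x ∈ Icc (-1 : ℝ) 1) (hux : u x < 0) : lam p r α < QRay p r α u g := by
  have hp : 0 < p := by linarith
  have hcont := hu.continuousOn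
  obtain ⟨c₁, c₂, hc₁, hc₁x, hxc₂, hc₂, hu₁, hu₂, hnonpos⟩ :=
    exists_nodal_interval hcont hu.apply_neg_one hu.2.2.2 hx hux
  have hv := hu.sub_two_mul_indicator_Ioc hp.ne' hc₁ (hc₁x.trans hxc₂).le hc₂ hu₁ hu₂
  have hvne : Nontriv fun x => u x - 2 * (Ioc c₁ c₂).indicator u x := by
    obtain ⟨y, hy, huy⟩ := hne
    exact ⟨y, hy, abs_pos.1 (by rw [abs_sub_two_mul_indicator]; exact abs_pos.2 huy)⟩
  have hM := integral_rpow_sub_one_mul_self_neg (r := r) (by linarith) (hc₁x.trans hxc₂)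
    (hcont.mono (Icc_subset_Icc hc₁ hc₂)) hnonpos ⟨hc₁x.le, hxc₂.le⟩ hux
  have hF : ContinuousOn (fun x => |u x| ^ (r - 1) * u x) (Icc (-1) 1) :=
    (hcont.abs.rpow_const fun _ _ => Or.inr (by linarith)).mul hcont
  refine (lam_le_QRay (by linarith) hrp hα.le hv hvne).trans_lt
    (QRay_lt_QRay_of_abs_integral_lt hp (by linarith) hα (hu.integral_abs_rpow_pos hp.le hne)
      (by simp only [abs_sub_two_mul_indicator]) (by simp only [abs_sub_two_mul_indicator]) ?_)
  rw [integral_rpow_sub_two_mul_indicator_Ioc (hF.intervalIntegrable_of_Icc (by norm_num)) hc₁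
    (hc₁x.trans hxc₂).le hc₂, abs_of_nonneg hI, abs_of_nonneg (by linarith)]
  linarith

lemma nonneg_of_QRay_eq_lam_of_neg {p r α : ℝ} {u g : ℝ → ℝ} (hr : 1 ≤ r) (hrp : r ≤ p)
    (hα : α < 0) (hu : MemW0 p u g) (hne : Nontriv u)
    (hI : 0 ≤ ∫ x in (-1 : ℝ)..1, |u x| ^ (r - 1) * u x) (hmin : QRay p r α u g = lam p r α) :
    ∀ x ∈ Icc (-1 : ℝ) 1, 0 ≤ u x := fun _ hx =>
  not_lt.1 fun hux => (lam_lt_QRay_of_neg hr hrp hα hu hne hI hx hux).ne' hmin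

lemma nonneg_or_nonpos_of_QRay_eq_lam_of_neg {p r α : ℝ} {u g : ℝ → ℝ} (hr : 1 ≤ r)
    (hrp : r ≤ p) (hα : α < 0) (hu : MemW0 p u g) (hne : Nontriv u)
    (hmin : QRay p r α u g = lam p r α) :
    (∀ x ∈ Icc (-1 : ℝ) 1, 0 ≤ u x) ∨ (∀ x ∈ Icc (-1 : ℝ) 1, u x ≤ 0) := by
  rcases le_total 0 (∫ x in (-1 : ℝ)..1, |u x| ^ (r - 1) * u x) with hI | hI
  · exact .inl (nonneg_of_QRay_eq_lam_of_neg hr hrp hα hu hne hI hmin)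
  · refine .inr fun x hx => neg_nonneg.1 (nonneg_of_QRay_eq_lam_of_neg hr hrp hα hu.neg ?_ ?_
      (by rwa [QRay_neg]) x hx)
    · obtain ⟨y, hy, huy⟩ := hne
      exact ⟨y, hy, neg_ne_zero.2 huy⟩
    · simpa only [Pi.neg_apply, abs_neg, mul_neg, intervalIntegral.integral_neg, neg_nonneg]
        using hI

lemma lam_zero_le_right_piece {p r : ℝ} {u g : ℝ → ℝ} (hr : 0 < r) (hrp : r ≤ p)
    (hu : MemW0 p u g) {c : ℝ} (hc : c ∈ Icc (-1 : ℝ) 1) (huc : u c = 0)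
    (hne : ∃ x ∈ Icc c 1, u x ≠ 0) :
    lam p r 0 ≤ (∫ x in c..1, |g x| ^ p) / ∫ x in c..1, |u x| ^ p := by
  have hp : p ≠ 0 := (hr.trans_le hrp).ne'
  obtain ⟨x, hx, hux⟩ := hne
  have hx' : x ∈ Ioc c 1 := ⟨hx.1.lt_of_ne fun h => hux (h ▸ huc), hx.2⟩
  have := lam_le_QRay hr hrp le_rfl (hu.indicator_Ioc hp hc.1 hc.2 le_rfl huc hu.2.2.2)
    ⟨x, ⟨hc.1.trans hx'.1.le, hx.2⟩, by rwa [indicator_of_mem hx']⟩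
  rwa [QRay_zero, abs_rpow_indicator hp, abs_rpow_indicator hp,
    integral_indicator_Ioc_eq hc.1 hc.2 le_rfl, integral_indicator_Ioc_eq hc.1 hc.2 le_rfl] at this

lemma lam_zero_le_stretched_left_piece {p r : ℝ} {u g : ℝ → ℝ} (hr : 0 < r) (hrp : r ≤ p)
    (hu : MemW0 p u g) {c : ℝ} (hc : c ∈ Ioc (-1 : ℝ) 1) (huc : u c = 0)
    (hne : ∃ x ∈ Icc (-1) c, u x ≠ 0) :
    lam p r 0 ≤ ((c + 1) / 2) ^ p * ((∫ x in (-1 : ℝ)..c, |g x| ^ p)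
      / ∫ x in (-1 : ℝ)..c, |u x| ^ p) := by
  set k := (c + 1) / 2
  have hk0 : 0 < k := by simp only [k]; linarith [hc.1]
  have hkc : 2 * k - 1 = c := by simp only [k]; ring
  obtain ⟨x, hx, hux⟩ := hne
  have := lam_le_QRay hr hrp le_rfl (hu.comp_mul_add hk0 (by simp only [k]; linarith [hc.2])
    (by rwa [hkc])) ⟨(x + 1) / k - 1, ⟨?_, ?_⟩, ?_⟩
  · rwa [QRay_zero_comp_mul_add _ _ _ _ hk0, hkc] at this
  · linarith [div_nonneg (by linarith [hx.1] : (0 : ℝ) ≤ x + 1) hk0.le]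
  · rw [sub_le_iff_le_add, div_le_iff₀ hk0]
    linarith [hx.2]
  · show u (k * ((x + 1) / k - 1) + (k - 1)) ≠ 0
    rwa [show k * ((x + 1) / k - 1) + (k - 1) = x by field_simp; ring]

lemma lam_zero_lt_QRay_zero_of_interior_node {p r : ℝ} {u g : ℝ → ℝ} (hr : 0 < r) (hrp : r ≤ p)
    (hu : MemW0 p u g) {c : ℝ} (hc : c ∈ Ioo (-1 : ℝ) 1) (huc : u c = 0)
    (hleft : ∃ x ∈ Icc (-1) c, u x ≠ 0) (hright : ∃ x ∈ Icc c 1, u x ≠ 0) :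
    lam p r 0 < QRay p r 0 u g := by
  have hp : 0 < p := hr.trans_le hrp
  have hcont := hu.continuousOn
  have hcI : c ∈ Icc (-1 : ℝ) 1 := Ioo_subset_Icc_self hc
  have hint : IntervalIntegrable (fun x => |u x| ^ p) volume (-1) 1 :=
    (hcont.abs.rpow_const fun _ _ => Or.inr hp.le).intervalIntegrable_of_Icc (by norm_num)
  have hsplit : ∀ f : ℝ → ℝ, IntervalIntegrable f volume (-1) 1 →
      ∫ x in (-1 : ℝ)..1, f x = (∫ x in (-1 : ℝ)..c, f x) + ∫ x in c..1, f x := fun f hf =>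
    (intervalIntegral.integral_add_adjacent_intervals (hf.mono_of_mem_Icc ⟨le_rfl, by norm_num⟩ hcI)
      (hf.mono_of_mem_Icc hcI ⟨by norm_num, le_rfl⟩)).symm
  set A₁ := ∫ x in (-1 : ℝ)..c, |g x| ^ p
  set A₂ := ∫ x in c..1, |g x| ^ p
  set D₁ := ∫ x in (-1 : ℝ)..c, |u x| ^ p
  set D₂ := ∫ x in c..1, |u x| ^ p
  have hD₁ : 0 < D₁ :=
    integral_abs_rpow_pos hc.1 (hcont.mono (Icc_subset_Icc le_rfl hc.2.le)) hp.le hleft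
  have hD₂ : 0 < D₂ :=
    integral_abs_rpow_pos hc.2 (hcont.mono (Icc_subset_Icc hc.1.le le_rfl)) hp.le hright
  have hA : 0 < A₁ + A₂ := by
    rw [← hsplit _ hu.2.1]
    refine (intervalIntegral.integral_nonneg (by norm_num)
      fun x _ => Real.rpow_nonneg (abs_nonneg _) _).lt_of_ne fun h => ?_
    obtain ⟨x, hx, hux⟩ := hleft
    exact hux (hu.eq_zero_of_integral_eq_zero h.symm x ⟨hx.1, hx.2.trans hc.2.le⟩)
  have hA₁ : 0 ≤ A₁ :=
    intervalIntegral.integral_nonneg hc.1.le fun x _ => Real.rpow_nonneg (abs_nonneg _) _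
  set k := (c + 1) / 2
  have hk0 : 0 < k := by simp only [k]; linarith [hc.1]
  have hk : k ^ p < 1 := Real.rpow_lt_one hk0.le (by simp only [k]; linarith [hc.2]) hp
  set l := lam p r 0
  have h₁ : l * D₁ ≤ k ^ p * A₁ := (le_div_iff₀ hD₁).1 ((lam_zero_le_stretched_left_piece hr hrp
    hu (Ioo_subset_Ioc_self hc) huc hleft).trans_eq (mul_div_assoc _ _ _).symm)
  have h₂ : l * D₂ ≤ A₂ := (le_div_iff₀ hD₂).1 (lam_zero_le_right_piece hr hrp hu hcI huc hright)
  rw [QRay_zero, hsplit _ hu.2.1, hsplit _ hint]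
  refine lt_of_not_ge fun hle => ?_
  have h₀ : A₁ + A₂ ≤ l * (D₁ + D₂) := (div_le_iff₀ (by positivity)).1 hle
  -- `A₁ ≤ l D₁ ≤ k^p A₁` forces `A₁ = 0`, hence `l ≤ 0`, hence `A₁ + A₂ ≤ 0`
  have hA₁0 : A₁ ≤ 0 := by nlinarith
  have hl : l ≤ 0 := by nlinarith [Real.rpow_nonneg hk0.le p]
  nlinarith

lemma nonneg_or_nonpos_of_QRay_zero_eq_lam {p r : ℝ} {u g : ℝ → ℝ} (hr : 0 < r) (hrp : r ≤ p)
    (hu : MemW0 p u g) (hmin : QRay p r 0 u g = lam p r 0) :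
    (∀ x ∈ Ioo (-1 : ℝ) 1, 0 ≤ u x) ∨ (∀ x ∈ Ioo (-1 : ℝ) 1, u x ≤ 0) := by
  by_contra! ⟨⟨x₁, hx₁, hu₁⟩, ⟨x₂, hx₂, hu₂⟩⟩
  have hsub : uIcc x₁ x₂ ⊆ Icc (-1) 1 :=
    uIcc_subset_Icc (Ioo_subset_Icc_self hx₁) (Ioo_subset_Icc_self hx₂)
  obtain ⟨c, hc, huc⟩ := intermediate_value_uIcc (hu.continuousOn.mono hsub)
    (Icc_subset_uIcc ⟨hu₁.le, hu₂.le⟩ : (0 : ℝ) ∈ uIcc (u x₁) (u x₂))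
  have hcI : c ∈ Ioo (-1 : ℝ) 1 := by
    rcases mem_uIcc.1 hc with h | h
    · exact ⟨hx₁.1.trans_le h.1, h.2.trans_lt hx₂.2⟩
    · exact ⟨hx₂.1.trans_le h.1, h.2.trans_lt hx₁.2⟩
  refine (lam_zero_lt_QRay_zero_of_interior_node hr hrp hu hcI huc ?_ ?_).ne' hmin <;>
    rcases mem_uIcc.1 hc with h | h
  · exact ⟨x₁, ⟨hx₁.1.le, h.1⟩, hu₁.ne⟩
  · exact ⟨x₂, ⟨hx₂.1.le, h.1⟩, hu₂.ne'⟩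
  · exact ⟨x₂, ⟨h.2, hx₂.2.le⟩, hu₂.ne'⟩
  · exact ⟨x₁, ⟨h.2, hx₁.2.le⟩, hu₁.ne⟩

lemma tendsto_lam_atBot {p r : ℝ} (hr : 0 < r) (hrp : r ≤ p) :
    Filter.Tendsto (fun α => lam p r α) Filter.atBot Filter.atBot := by
  have hp : 0 ≤ p := by linarith
  have hu := memW0_one_sub_sq p hp
  have hne : Nontriv fun x : ℝ => 1 - x ^ 2 := ⟨0, by norm_num, by norm_num⟩
  have hD := hu.integral_abs_rpow_pos hp hne
  have hB : 0 < |∫ x in (-1 : ℝ)..1, |1 - x ^ 2| ^ (r - 1) * (1 - x ^ 2)| ^ (p / r) := by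
    refine Real.rpow_pos_of_pos (abs_pos.2 (ne_of_gt ?_)) _
    rw [intervalIntegral.integral_congr fun x hx => abs_rpow_sub_one_mul_self_of_nonneg
      (by linarith) (show 0 ≤ 1 - x ^ 2 by
        rw [uIcc_of_le (by norm_num)] at hx
        nlinarith [hx.1, hx.2])]
    exact hu.integral_abs_rpow_pos (by linarith) hne
  have hQ : Filter.Tendsto (fun α => QRay p r α (fun x => 1 - x ^ 2) fun x => -(2 * x))
      Filter.atBot Filter.atBot :=
    (Filter.tendsto_atBot_add_const_left _ _
      (Filter.tendsto_id.atBot_mul_const hB)).atBot_div_const hD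
  exact Filter.tendsto_atBot_mono' _ ((Filter.eventually_le_atBot 0).mono fun α hα =>
    lam_le_QRay (by linarith) hrp hα hu hne) hQ

/-- for `α ≤ 0` minimizers do not change sign, and `λ_α → -∞` as `α → -∞`. -/
theorem minimizer_constant_sign_of_nonpos (p r : ℝ) (hp : 2 ≤ p) (hr1 : p / 2 ≤ r)
    (hr2 : r ≤ p) :
    (∀ α ≤ (0 : ℝ), ∀ u g, MemW0 p u g → Nontriv u → QRay p r α u g = lam p r α →
      (∀ x ∈ Ioo (-1 : ℝ) 1, 0 ≤ u x) ∨ (∀ x ∈ Ioo (-1 : ℝ) 1, u x ≤ 0)) ∧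
    Filter.Tendsto (fun α => lam p r α) Filter.atBot Filter.atBot := by
  have hr : 1 ≤ r := by linarith
  refine ⟨fun α hα u g hu hne hmin => ?_, tendsto_lam_atBot (by linarith) hr2⟩
  rcases hα.eq_or_lt with rfl | hα
  · exact nonneg_or_nonpos_of_QRay_zero_eq_lam (by linarith) hr2 hu hmin
  · exact (nonneg_or_nonpos_of_QRay_eq_lam_of_neg hr hr2 hα hu hne hmin).imp
      (fun h x hx => h x (Ioo_subset_Icc_self hx)) fun h x hx => h x (Ioo_subset_Icc_self hx)
end
end

section
/- Let p ≥ 2 and m ∈ (0,1). With A(m,y) = m^{p/2} + (1 − m^{p/2}) y^{p/2} − y^p and B(m,y) = m^{p/2} − (1 − m^{p/2}) m^{p/2} y^{p/2} − m^p y^p for y ∈ [0,1], one has the integral identity ∫_0^1 (1 − y^{p/2}) A(m,y)^{−(p+1)/p} dy = ∫_0^1 m (1 − y^{p/2}) B(m,y)^{−(p+1)/p} dy. -/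
/-!
Write `c = m^{p/2}`, `s = y^{p/2}` and `w = c + (1 - c) s`. The substitution
`φ(y) = y w^{-2/p}` acts on `s` as the Möbius map `s ↦ s / w`, an increasing bijection of
`[0,1]` fixing both ends. Since `A(m,y) = (1 - s)(s + c)`, one finds `1 - φ^{p/2} = c (1 - s) / w`
and `B(m, φ(y)) = (c / w)^2 A(m,y)`, while `φ' = c w^{-2/p-1}`; with `c^{2/p} = m` all powers of
`c` and `w` cancel, so the change of variables `y ↦ φ(y)` turns the right-hand integrand into the
left-hand one.
-/

open Set MeasureTheory intervalIntegral Real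

noncomputable section

lemma Real.rpow_eq_rpow_half_sq {x : ℝ} (hx : 0 ≤ x) (p : ℝ) : x ^ p = (x ^ (p / 2)) ^ 2 := by
  rw [← rpow_mul_natCast hx]
  norm_num

lemma Real.rpow_half_rpow_two_div {x p : ℝ} (hx : 0 ≤ x) (hp : p ≠ 0) :
    (x ^ (p / 2)) ^ (2 / p) = x := by
  rw [← rpow_mul hx, div_mul_div_comm, mul_comm p, div_self (by positivity), rpow_one]

namespace AB

def A (p m y : ℝ) : ℝ := m ^ (p / 2) + (1 - m ^ (p / 2)) * y ^ (p / 2) - y ^ p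

def B (p m y : ℝ) : ℝ :=
  m ^ (p / 2) - (1 - m ^ (p / 2)) * m ^ (p / 2) * y ^ (p / 2) - m ^ p * y ^ p

def weight (p m y : ℝ) : ℝ := m ^ (p / 2) + (1 - m ^ (p / 2)) * y ^ (p / 2)

def subst (p m y : ℝ) : ℝ := y * weight p m y ^ (-(2 / p))

variable {p m y : ℝ}

lemma A_eq_mul (hy : 0 ≤ y) :
    A p m y = (1 - y ^ (p / 2)) * (y ^ (p / 2) + m ^ (p / 2)) := by
  rw [A, rpow_eq_rpow_half_sq hy p]
  ring

lemma A_nonneg (hp : 0 ≤ p) (hm : 0 ≤ m) (hy : y ∈ Icc (0 : ℝ) 1) : 0 ≤ A p m y := by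
  rw [A_eq_mul hy.1]
  have := rpow_le_one hy.1 hy.2 (by positivity : 0 ≤ p / 2)
  have := rpow_nonneg hy.1 (p / 2)
  have := rpow_nonneg hm (p / 2)
  nlinarith

lemma weight_pos (hp : 0 ≤ p) (hm0 : 0 < m) (hm1 : m ≤ 1) (hy : 0 ≤ y) : 0 < weight p m y := by
  have := rpow_pos_of_pos hm0 (p / 2)
  have := rpow_le_one hm0.le hm1 (by positivity : 0 ≤ p / 2)
  have := rpow_nonneg hy (p / 2)
  rw [weight]
  nlinarith

lemma subst_rpow_half (hp : p ≠ 0) (hy : 0 ≤ y) (hw : 0 < weight p m y) :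
    subst p m y ^ (p / 2) = y ^ (p / 2) / weight p m y := by
  rw [subst, mul_rpow hy (rpow_nonneg hw.le _), ← rpow_mul hw.le,
    show -(2 / p) * (p / 2) = -1 by field_simp, rpow_neg_one, ← div_eq_mul_inv]

lemma one_sub_subst_rpow_half (hp : p ≠ 0) (hy : 0 ≤ y) (hw : 0 < weight p m y) :
    1 - subst p m y ^ (p / 2) = m ^ (p / 2) * (1 - y ^ (p / 2)) / weight p m y := by
  rw [subst_rpow_half hp hy hw, eq_div_iff hw.ne', sub_mul, div_mul_cancel₀ _ hw.ne', one_mul,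
    weight]
  ring

lemma B_subst (hp : p ≠ 0) (hm : 0 ≤ m) (hy : 0 ≤ y) (hw : 0 < weight p m y) :
    B p m (subst p m y) = (m ^ (p / 2) / weight p m y) ^ 2 * A p m y := by
  have hs := subst_rpow_half hp hy hw
  have hsubst : 0 ≤ subst p m y := mul_nonneg hy (rpow_nonneg hw.le _)
  rw [B, rpow_eq_rpow_half_sq hm p, rpow_eq_rpow_half_sq hsubst p, hs, A_eq_mul hy]
  rw [weight] at hw ⊢
  field_simp
  ring

lemma subst_zero : subst p m 0 = 0 := zero_mul _

lemma subst_one : subst p m 1 = 1 := by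
  simp [subst, weight]

lemma continuousOn_subst (hp : 0 ≤ p) (hm0 : 0 < m) (hm1 : m ≤ 1) :
    ContinuousOn (subst p m) (Icc 0 1) := by
  have hw : Continuous (weight p m) :=
    continuous_const.add (continuous_const.mul (continuous_rpow_const (by positivity)))
  exact continuousOn_id.mul <| hw.continuousOn.rpow_const fun y hy =>
    Or.inl (weight_pos hp hm0 hm1 hy.1).ne'

lemma hasDerivAt_subst (hp : p ≠ 0) (hy : 0 < y) (hw : 0 < weight p m y) :
    HasDerivAt (subst p m) (m ^ (p / 2) * weight p m y ^ (-(2 / p) - 1)) y := by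
  have hweight : HasDerivAt (weight p m) ((1 - m ^ (p / 2)) * (p / 2 * y ^ (p / 2 - 1))) y :=
    ((hasDerivAt_rpow_const (Or.inl hy.ne')).const_mul _).const_add _
  refine ((hasDerivAt_id y).mul ((hasDerivAt_rpow_const (p := -(2 / p)) (Or.inl hw.ne')).comp y
    hweight)).congr_deriv ?_
  have hweight_eq : weight p m y = m ^ (p / 2) + (1 - m ^ (p / 2)) * (y * y ^ (p / 2 - 1)) := by
    rw [rpow_sub_one hy.ne', mul_div_cancel₀ _ hy.ne', weight]
  rw [rpow_sub_one hw.ne']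
  simp only [Function.comp_apply, id, one_mul]
  generalize weight p m y ^ (-(2 / p)) = W, y ^ (p / 2 - 1) = u at *
  field_simp
  linear_combination W * hweight_eq

lemma integrand_A_eq_deriv_mul_integrand_B_subst (hp : 0 < p) (hm0 : 0 < m) (hm1 : m ≤ 1)
    (hy : y ∈ Icc (0 : ℝ) 1) :
    (1 - y ^ (p / 2)) * A p m y ^ (-((p + 1) / p)) =
      m ^ (p / 2) * weight p m y ^ (-(2 / p) - 1) *
        (m * (1 - subst p m y ^ (p / 2)) * B p m (subst p m y) ^ (-((p + 1) / p))) := by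
  have hw := weight_pos hp.le hm0 hm1 hy.1
  have hc := rpow_pos_of_pos hm0 (p / 2)
  have hcw : 0 < m ^ (p / 2) / weight p m y := div_pos hc hw
  have hu : 0 < weight p m y ^ (2 / p) := rpow_pos_of_pos hw _
  have hscale : ((m ^ (p / 2) / weight p m y) ^ 2) ^ (-((p + 1) / p)) =
      ((m ^ (p / 2) / weight p m y) ^ 2)⁻¹ / (m / weight p m y ^ (2 / p)) := by
    rw [← rpow_natCast_mul hcw.le, show ((2 : ℕ) : ℝ) * -((p + 1) / p) = -2 - 2 / p by
      field_simp; ring, rpow_sub hcw, rpow_neg hcw.le, rpow_two, div_rpow hc.le hw.le,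
      rpow_half_rpow_two_div hm0.le hp.ne']
  have hweight : weight p m y ^ (-(2 / p) - 1) = (weight p m y ^ (2 / p))⁻¹ / weight p m y := by
    rw [rpow_sub_one hw.ne', rpow_neg hw.le]
  rw [one_sub_subst_rpow_half hp.ne' hy.1 hw, B_subst hp.ne' hm0.le hy.1 hw,
    mul_rpow (sq_nonneg _) (A_nonneg hp.le hm0.le hy), hscale, hweight]
  generalize weight p m y ^ (2 / p) = u at *
  field_simp

end AB

/-- the integral identity between `A` and `B`. -/
theorem AB_integral_identity (p m : ℝ) (hp : 2 ≤ p) (hm : m ∈ Ioo (0 : ℝ) 1) :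
    (∫ y in (0 : ℝ)..1, (1 - y ^ (p / 2)) *
        (m ^ (p / 2) + (1 - m ^ (p / 2)) * y ^ (p / 2) - y ^ p) ^ (-((p + 1) / p)))
    = ∫ y in (0 : ℝ)..1, m * (1 - y ^ (p / 2)) *
        (m ^ (p / 2) - (1 - m ^ (p / 2)) * m ^ (p / 2) * y ^ (p / 2) - m ^ p * y ^ p)
          ^ (-((p + 1) / p)) := by
  have hp0 : 0 < p := by linarith
  obtain ⟨hm0, hm1⟩ := hm
  have hw (y : ℝ) (hy : y ∈ Icc (0 : ℝ) 1) : 0 < AB.weight p m y :=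
    AB.weight_pos hp0.le hm0 hm1.le hy.1
  have hsubst := integral_Icc_deriv_smul_of_deriv_nonneg
    (g := fun y => m * (1 - y ^ (p / 2)) * AB.B p m y ^ (-((p + 1) / p)))
    (AB.continuousOn_subst hp0.le hm0 hm1.le)
    (fun y hy => AB.hasDerivAt_subst hp0.ne' hy.1 (hw y (Ioo_subset_Icc_self hy)))
    (fun y hy =>
      mul_nonneg (rpow_nonneg hm0.le _) (rpow_nonneg (hw y (Ioo_subset_Icc_self hy)).le _))
    zero_le_one
  rw [AB.subst_zero, AB.subst_one] at hsubst
  rw [integral_of_le zero_le_one, integral_of_le zero_le_one, ← integral_Icc_eq_integral_Ioc,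
    ← integral_Icc_eq_integral_Ioc]
  exact (setIntegral_congr_fun measurableSet_Icc fun y hy =>
    AB.integrand_A_eq_deriv_mul_integrand_B_subst hp0 hm0 hm1.le hy).trans hsubst
end
end
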